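/- Let a, b be symbols of {+,-,*} and X, Y words over {+,-,*}. If aX ≥ bY then X ≥ Y; and if additionally a is not ≥ b (in the order where * < +, * < -, and +,- are incomparable), then X ≥ bY. -/
import Mathlib


inductive Symb : Type
  | plus | minus | star
deriving DecidableEq


/-- the dual of a symbol: `+` ↦ `-`, `-` ↦ `+`, `*` ↦ `*` -/
def dualSym : Symb → Symb
  | Symb.plus => Symb.minus
  | Symb.minus => Symb.plus
  | Symb.star => Symb.star

/-- the dual (involution) of a word: reverse and dualize each symbol -/
def dualWord (W : List Symb) : List Symb := (W.map dualSym).reverse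

/-- the arc relation of the reflexive path `P(W)` on vertices `{0,…,|W|}` -/
def pathArc (W : List Symb) (i j : ℕ) : Prop :=
  i ≤ W.length ∧ j ≤ W.length ∧
    (i = j ∨ (j = i + 1 ∧ (W[i]? = some Symb.plus ∨ W[i]? = some Symb.star))
           ∨ (i = j + 1 ∧ (W[j]? = some Symb.minus ∨ W[j]? = some Symb.star)))

/-- `f` is an end-point preserving homomorphism from the path `P(V)` onto the path `P(U)` -/
def EPHom (V U : List Symb) (f : ℕ → ℕ) : Prop :=
  f 0 = 0 ∧ f V.length = U.length ∧
  (∀ i j, pathArc V i j → pathArc U (f i) (f j)) ∧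
  (∀ m, m ≤ U.length → ∃ i, i ≤ V.length ∧ f i = m)

/-- the order on words: `U ≤ V` iff there is an end-point preserving
homomorphism from `P(V)` onto `P(U)` -/
def wle (U V : List Symb) : Prop := ∃ f, EPHom V U f

/-- the order on single symbols: `* ≤ +`, `* ≤ -`, `+` and `-` incomparable -/
def symLe (a b : Symb) : Prop := a = b ∨ a = Symb.star

lemma pathArc_cons_succ {c : Symb} {W : List Symb} {i j : ℕ} (h : pathArc W i j) :
    pathArc (c :: W) (i + 1) (j + 1) := by
  obtain ⟨hi, hj, hc⟩ := h
  refine ⟨by simp; omega, by simp; omega, ?_⟩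
  rcases hc with h | ⟨h, hs⟩ | ⟨h, hs⟩
  · left; omega
  · right; left; exact ⟨by omega, by simpa using hs⟩
  · right; right; exact ⟨by omega, by simpa using hs⟩

lemma pathArc_cons_pred {b : Symb} {Y : List Symb} {p q : ℕ} (h : pathArc (b :: Y) p q) :
    pathArc Y (p - 1) (q - 1) := by
  obtain ⟨hp, hq, hc⟩ := h
  simp only [List.length_cons] at hp hq
  refine ⟨by omega, by omega, ?_⟩
  rcases hc with h | ⟨h, hs⟩ | ⟨h, hs⟩
  · left; omega
  · rcases p with _ | p'
    · left; omega
    · right; left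
      refine ⟨by omega, ?_⟩
      have : p' + 1 - 1 = p' := rfl
      rw [this]
      simpa using hs
  · rcases q with _ | q'
    · left; omega
    · right; right
      refine ⟨by omega, ?_⟩
      have : q' + 1 - 1 = q' := rfl
      rw [this]
      simpa using hs

lemma arc_zero_one {c : Symb} {X : List Symb} (hc : c = Symb.plus ∨ c = Symb.star) :
    pathArc (c :: X) 0 1 := by
  refine ⟨Nat.zero_le _, by simp, Or.inr (Or.inl ⟨rfl, ?_⟩)⟩
  rcases hc with h | h <;> simp [h]

lemma arc_one_zero {c : Symb} {X : List Symb} (hc : c = Symb.minus ∨ c = Symb.star) :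
    pathArc (c :: X) 1 0 := by
  refine ⟨by simp, Nat.zero_le _, Or.inr (Or.inr ⟨rfl, ?_⟩)⟩
  rcases hc with h | h <;> simp [h]

lemma arc_from_zero {W : List Symb} {j : ℕ} (h : pathArc W 0 j) :
    j = 0 ∨ (j = 1 ∧ (W[0]? = some Symb.plus ∨ W[0]? = some Symb.star)) := by
  obtain ⟨-, -, hc⟩ := h
  rcases hc with h | ⟨h, hs⟩ | ⟨h, hs⟩
  · left; omega
  · right; exact ⟨h, hs⟩
  · omega

lemma arc_to_zero {W : List Symb} {i : ℕ} (h : pathArc W i 0) :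
    i = 0 ∨ (i = 1 ∧ (W[0]? = some Symb.minus ∨ W[0]? = some Symb.star)) := by
  obtain ⟨-, -, hc⟩ := h
  rcases hc with h | ⟨h, hs⟩ | ⟨h, hs⟩
  · left; omega
  · omega
  · right; exact ⟨h, hs⟩

/-- If `aX ≥ bY` then `X ≥ Y`; and if moreover `a` is not `≥ b`, then `X ≥ bY`. -/
theorem stmt_6 (a b : Symb) (X Y : List Symb) (h : wle (b :: Y) (a :: X)) :
    wle Y X ∧ (¬ symLe b a → wle (b :: Y) X) := by
  obtain ⟨f, hf0, hfN, hfarc, hfsurj⟩ := h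
  simp only [List.length_cons] at hfN hfsurj
  -- f 1 ≤ 1
  have hf1 : f 1 ≤ 1 := by
    cases a with
    | plus =>
      have := hfarc 0 1 (arc_zero_one (Or.inl rfl))
      rw [hf0] at this
      rcases arc_from_zero this with h | ⟨h, -⟩ <;> omega
    | minus =>
      have := hfarc 1 0 (arc_one_zero (Or.inl rfl))
      rw [hf0] at this
      rcases arc_to_zero this with h | ⟨h, -⟩ <;> omega
    | star =>
      have := hfarc 0 1 (arc_zero_one (Or.inr rfl))
      rw [hf0] at this
      rcases arc_from_zero this with h | ⟨h, -⟩ <;> omega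
  constructor
  · refine ⟨fun i => f (i + 1) - 1, show f 1 - 1 = 0 by omega, ?_, ?_, ?_⟩
    · show f (X.length + 1) - 1 = Y.length
      rw [hfN]
      rfl
    · intro i j hij
      exact pathArc_cons_pred (hfarc (i + 1) (j + 1) (pathArc_cons_succ hij))
    · intro m hm
      obtain ⟨i, hi, hfi⟩ := hfsurj (m + 1) (by omega)
      rcases i with _ | i'
      · rw [hf0] at hfi; omega
      · exact ⟨i', by omega, show f (i' + 1) - 1 = m by omega⟩
  · intro hnle
    have hba : b ≠ a ∧ b ≠ Symb.star := by
      constructor <;> intro hc <;> exact hnle (by simp [symLe, hc])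
    -- f 1 = 0
    have h1 : f 1 = 0 := by
      cases a with
      | plus =>
        have := hfarc 0 1 (arc_zero_one (Or.inl rfl))
        rw [hf0] at this
        rcases arc_from_zero this with h | ⟨h, hs⟩
        · exact h
        · simp only [List.getElem?_cons_zero, Option.some.injEq] at hs
          rcases hs with hs | hs <;> exact absurd hs (by tauto)
      | minus =>
        have := hfarc 1 0 (arc_one_zero (Or.inl rfl))
        rw [hf0] at this
        rcases arc_to_zero this with h | ⟨h, hs⟩
        · exact h
        · simp only [List.getElem?_cons_zero, Option.some.injEq] at hs
          rcases hs with hs | hs <;> exact absurd hs (by tauto)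
      | star =>
        have h01 := hfarc 0 1 (arc_zero_one (Or.inr rfl))
        have h10 := hfarc 1 0 (arc_one_zero (Or.inr rfl))
        rw [hf0] at h01 h10
        rcases arc_from_zero h01 with h | ⟨h, hs1⟩
        · exact h
        rcases arc_to_zero h10 with h | ⟨h', hs2⟩
        · exact h
        simp only [List.getElem?_cons_zero, Option.some.injEq] at hs1 hs2
        rcases hs1 with hs1 | hs1
        · rcases hs2 with hs2 | hs2 <;> simp_all
        · exact absurd hs1 hba.2
    refine ⟨fun i => f (i + 1), h1, ?_, ?_, ?_⟩
    · simpa using hfN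
    · intro i j hij
      exact hfarc (i + 1) (j + 1) (pathArc_cons_succ hij)
    · intro m hm
      simp only [List.length_cons] at hm
      obtain ⟨i, hi, hfi⟩ := hfsurj m (by omega)
      rcases i with _ | i'
      · exact ⟨0, Nat.zero_le _, show f 1 = m by rw [h1, ← hf0, hfi]⟩
      · exact ⟨i', by omega, hfi⟩
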